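/- (Example: exact optimal inducible utility cannot be strongly induced.) Let $u^L = \begin{pmatrix} 1 & 0 \\ 0 & 1 \\ 1/2 & 1/4 \end{pmatrix}$ and $\mathbf{x}^* = (0,0,1)$. Then for every $\tilde{u}^F \in \mathbb{R}^{3\times 2}$, the profile $(\mathbf{x}^*,1)$ is not the unique SSE of the game $(u^L,\tilde{u}^F)$. -/

import Mathlib

open Finset

noncomputable section

def simplex (m : ℕ) : Set (Fin m → ℝ) := stdSimplex ℝ (Fin m)

def util {m n : ℕ} (u : Fin m → Fin n → ℝ) (y : Fin m → ℝ) (j : Fin n) : ℝ :=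
  ∑ i, y i * u i j

/-- \`(x, j)\` is a strong Stackelberg equilibrium of the game with leader matrix \`uL\`
and follower matrix \`v\`. -/
def SSE {m n : ℕ} (uL v : Fin m → Fin n → ℝ) (x : Fin m → ℝ) (j : Fin n) : Prop :=
  x ∈ simplex m ∧ (∀ ℓ, util v x ℓ ≤ util v x j) ∧
    ∀ y ∈ simplex m, ∀ ℓ, (∀ k, util v y k ≤ util v y ℓ) → util uL y ℓ ≤ util uL x j

/-!
Let `x* = (0,0,1)`, where the leader earns `1/2` against response `0`, and look at the edge
`w t = (1 - t, t, 0)` of the simplex, where the leader earns `1 - t` against `0` and `t`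
against `1`. At the midpoint `w (1/2)` both responses give the leader `1/2`. If `0` is a best
response there, `(w (1/2), 0)` is a second SSE. Otherwise `1` is the strict best response, hence
still a best response at `w t` for some `t > 1/2`, where the leader earns `t > 1/2`: so
`(x*, 0)` is not an SSE at all.
-/

open Filter Topology

def IsBestResponse {m n : ℕ} (v : Fin m → Fin n → ℝ) (y : Fin m → ℝ) (ℓ : Fin n) : Prop :=
  ∀ k, util v y k ≤ util v y ℓ

theorem continuous_util {m n : ℕ} (u : Fin m → Fin n → ℝ) (j : Fin n) :
    Continuous fun y => util u y j := by
  unfold util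
  fun_prop

theorem eventually_isBestResponse {m n : ℕ} {v : Fin m → Fin n → ℝ} {y : Fin m → ℝ} {ℓ : Fin n}
    (h : ∀ k ≠ ℓ, util v y k < util v y ℓ) : ∀ᶠ z in 𝓝 y, IsBestResponse v z ℓ := by
  refine eventually_all.2 fun k => ?_
  by_cases hk : k = ℓ
  · exact .of_forall fun z => hk ▸ le_rfl
  · exact ((continuous_util v k).continuousAt.eventually_lt (continuous_util v ℓ).continuousAt
      (h k hk)).mono fun _ => le_of_lt

theorem SSE.of_util_eq {m n : ℕ} {uL v : Fin m → Fin n → ℝ} {x y : Fin m → ℝ} {j ℓ : Fin n}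
    (hx : SSE uL v x j) (hy : y ∈ simplex m) (hℓ : IsBestResponse v y ℓ)
    (heq : util uL y ℓ = util uL x j) : SSE uL v y ℓ :=
  ⟨hy, hℓ, fun z hz k hk => heq ▸ hx.2.2 z hz k hk⟩

theorem vec_mem_simplex_three {a b c : ℝ} (ha : 0 ≤ a) (hb : 0 ≤ b) (hc : 0 ≤ c)
    (h : a + b + c = 1) : ![a, b, c] ∈ simplex 3 := by
  refine ⟨fun i => ?_, by simp [Fin.sum_univ_three, h]⟩
  fin_cases i <;> simpa

/-- Example: $(x^*, 1)$ cannot be strongly induced. -/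
theorem stmt_18 (v : Fin 3 → Fin 2 → ℝ) :
    ¬ (SSE ![![(1:ℝ),0],![0,1],![1/2,1/4]] v ![0,0,1] 0 ∧
       ∀ z ℓ, SSE ![![(1:ℝ),0],![0,1],![1/2,1/4]] v z ℓ → z = ![0,0,1] ∧ ℓ = 0) := by
  rintro ⟨hx, huniq⟩
  set w : ℝ → Fin 3 → ℝ := fun t => ![1 - t, t, 0]
  have hw_mem {t : ℝ} (h0 : 0 ≤ t) (h1 : t ≤ 1) : w t ∈ simplex 3 :=
    vec_mem_simplex_three (by linarith) h0 le_rfl (by ring)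
  by_cases hzero : util v (w (1/2)) 1 ≤ util v (w (1/2)) 0
  · have hsse := hx.of_util_eq (hw_mem (by norm_num) (by norm_num))
      (Fin.forall_fin_two.2 ⟨le_rfl, hzero⟩) (by simp [w, util, Fin.sum_univ_three]; norm_num)
    simpa [w] using congrFun (huniq _ _ hsse).1 1
  · have hone : ∀ k ≠ 1, util v (w (1/2)) k < util v (w (1/2)) 1 := by
      simpa [Fin.forall_fin_two] using hzero
    have hw_cont : Tendsto w (𝓝[>] (1/2)) (𝓝 (w (1/2))) :=
      (by fun_prop : Continuous w).continuousAt.tendsto.mono_left nhdsWithin_le_nhds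
    obtain ⟨t, hbr, ht⟩ := ((hw_cont.eventually (eventually_isBestResponse hone)).and
      (Ioo_mem_nhdsGT (by norm_num : (1/2 : ℝ) < 1))).exists
    have hopt := hx.2.2 (w t) (hw_mem (by linarith [ht.1]) ht.2.le) 1 hbr
    simp [w, util, Fin.sum_univ_three] at hopt
    linarith [ht.1]
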